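/- Let $X$ be a normed space and suppose a family $(a_{k,\ell})_{k,\ell\in\mathbb{Z}}$ of nonnegative reals satisfies, for some $\delta>0$ and positive constants $A_{\pm\pm}$, the bounds $\sum_{k,\ell}2^{2k\sigma_1}2^{2\ell\sigma_2}a_{k,\ell}^2\leq A_{\epsilon_1\epsilon_2}^2$ for $(\sigma_1,\sigma_2)=(s_1+\epsilon_1\delta,\ s_2+\epsilon_2\delta)$ with all four sign choices $\epsilon_1,\epsilon_2\in\{+1,-1\}$. Then $\sum_{k,\ell\in\mathbb{Z}}2^{ks_1}2^{\ell s_2}a_{k,\ell}\lesssim A_{++}^{1/4}A_{+-}^{1/4}A_{-+}^{1/4}A_{--}^{1/4}$. -/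

import Mathlib

open ENNReal


lemma two_ne_top' : (2:ℝ≥0∞) ≠ ⊤ := by norm_num

lemma E_ne_top (x : ℝ) : (2:ℝ≥0∞)^x ≠ ⊤ := by
  rw [← ENNReal.coe_ofNat, ← ENNReal.coe_rpow_of_ne_zero (by norm_num)]
  exact ENNReal.coe_ne_top

lemma E_pos (x : ℝ) : (0:ℝ≥0∞) < (2:ℝ≥0∞)^x :=
  ENNReal.rpow_pos (by norm_num) two_ne_top'

lemma E_mul (x y : ℝ) : (2:ℝ≥0∞)^x * (2:ℝ≥0∞)^y = (2:ℝ≥0∞)^(x+y) :=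
  (ENNReal.rpow_add x y (by norm_num) two_ne_top').symm

noncomputable def Kc (δ : ℝ) : ℝ≥0∞ := (1 - (2:ℝ≥0∞)^(-δ))⁻¹ * (1 + (2:ℝ≥0∞)^δ)

lemma E_neg_lt_one {δ : ℝ} (hδ : 0 < δ) : (2:ℝ≥0∞)^(-δ) < 1 := by
  have := ENNReal.rpow_lt_rpow_of_exponent_lt (x := 2) (y := -δ) (z := 0)
    one_lt_two two_ne_top' (by linarith)
  simpa using this

lemma Kc_ne_zero {δ : ℝ} (hδ : 0 < δ) : Kc δ ≠ 0 := by
  apply mul_ne_zero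
  · rw [ENNReal.inv_ne_zero]
    exact (ENNReal.sub_ne_top one_ne_top)
  · simp
lemma Kc_ne_top {δ : ℝ} (hδ : 0 < δ) : Kc δ ≠ ⊤ := by
  apply ENNReal.mul_ne_top
  · rw [ENNReal.inv_ne_top]
    have h1 : (0:ℝ≥0∞) < 1 - (2:ℝ≥0∞)^(-δ) := tsub_pos_iff_lt.mpr (E_neg_lt_one hδ)
    exact h1.ne'
  · exact ENNReal.add_ne_top.mpr ⟨one_ne_top, E_ne_top δ⟩

lemma real_half {x y t : ℝ} (hx : 0 < x) (hy : 0 < y)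
    (h : (2:ℝ)^(2*t) ≤ x/y) : (2:ℝ)^t * y ≤ Real.sqrt (x*y) := by
  have h2 : (2:ℝ)^(2*t) * y ≤ x := (le_div_iff₀ hy).mp h
  have hp : (0:ℝ) < (2:ℝ)^t := Real.rpow_pos_of_pos two_pos t
  have hpp : (2:ℝ)^t * (2:ℝ)^t = (2:ℝ)^(2*t) := by
    rw [← Real.rpow_add two_pos]; ring_nf
  rw [Real.le_sqrt (by positivity) (by positivity)]
  have e : ((2:ℝ)^t * y)^2 = (2:ℝ)^(2*t) * (y*y) := by rw [← hpp]; ring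
  rw [e]
  nlinarith [mul_le_mul_of_nonneg_right h2 hy.le]

lemma enn_half {B C : ℝ≥0∞}
    (hB0 : B ≠ 0) (hBt : B ≠ ⊤) (hC0 : C ≠ 0) (hCt : C ≠ ⊤) {t : ℝ}
    (h : (2:ℝ)^(2*t) ≤ B.toReal / C.toReal) :
    (2:ℝ≥0∞)^t * C ≤ (B*C)^((1:ℝ)/2) := by
  have hbr : 0 < B.toReal := ENNReal.toReal_pos hB0 hBt
  have hcr : 0 < C.toReal := ENNReal.toReal_pos hC0 hCt
  have hl : ((2:ℝ≥0∞)^t * C) ≠ ⊤ := ENNReal.mul_ne_top (E_ne_top t) hCt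
  have hr : ((B*C)^((1:ℝ)/2)) ≠ ⊤ :=
    ENNReal.rpow_ne_top_of_nonneg (by norm_num) (ENNReal.mul_ne_top hBt hCt)
  rw [← ENNReal.toReal_le_toReal hl hr, ENNReal.toReal_mul]
  rw [show ((2:ℝ≥0∞)^t).toReal = (2:ℝ)^t from by rw [← ENNReal.toReal_rpow]; norm_num]
  rw [← ENNReal.toReal_rpow, ENNReal.toReal_mul, ← Real.sqrt_eq_rpow]
  exact real_half hbr hcr h

lemma geo_sum {δ : ℝ} : ∑' (n:ℕ), (2:ℝ≥0∞)^(-(n:ℝ)*δ) = (1 - (2:ℝ≥0∞)^(-δ))⁻¹ := by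
  have h : ∀ n : ℕ, (2:ℝ≥0∞)^(-(n:ℝ)*δ) = ((2:ℝ≥0∞)^(-δ))^n := by
    intro n
    rw [← ENNReal.rpow_natCast ((2:ℝ≥0∞)^(-δ)) n, ← ENNReal.rpow_mul]
    congr 1; ring
  rw [tsum_congr h]; exact ENNReal.tsum_geometric _

lemma oneD {δ : ℝ} (hδ : 0 < δ) (b : ℤ → ℝ≥0∞) (B C : ℝ≥0∞)
    (hB : ∀ k : ℤ, b k ≤ (2:ℝ≥0∞) ^ (-(k:ℝ)*δ) * B)
    (hC : ∀ k : ℤ, b k ≤ (2:ℝ≥0∞) ^ ((k:ℝ)*δ) * C) :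
    ∑' k : ℤ, b k ≤ Kc δ * (B*C)^((1:ℝ)/2) := by
  by_cases hB0 : B = 0
  · have hb : ∀ k, b k = 0 := fun k =>
      le_antisymm (by simpa [hB0] using hB k) zero_le
    simp [hb]
  by_cases hC0 : C = 0
  · have hb : ∀ k, b k = 0 := fun k =>
      le_antisymm (by simpa [hC0] using hC k) zero_le
    simp [hb]
  by_cases hBt : B = ⊤
  · have : (B*C)^((1:ℝ)/2) = ⊤ := by
      rw [hBt, ENNReal.top_mul hC0]; exact ENNReal.top_rpow_of_pos (by norm_num)
    rw [this, ENNReal.mul_top (Kc_ne_zero hδ)]; exact le_top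
  by_cases hCt : C = ⊤
  · have : (B*C)^((1:ℝ)/2) = ⊤ := by
      rw [hCt, ENNReal.mul_top hB0]; exact ENNReal.top_rpow_of_pos (by norm_num)
    rw [this, ENNReal.mul_top (Kc_ne_zero hδ)]; exact le_top
  -- main case
  set br := B.toReal with hbr'
  set cr := C.toReal with hcr'
  have hbr : 0 < br := ENNReal.toReal_pos hB0 hBt
  have hcr : 0 < cr := ENNReal.toReal_pos hC0 hCt
  have hrpos : 0 < br / cr := div_pos hbr hcr
  set L : ℝ := Real.logb 2 (br/cr) with hL
  set N : ℤ := ⌊L / (2*δ)⌋ with hN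
  have h2δ : (0:ℝ) < 2*δ := by linarith
  have hf1 : 2*(N:ℝ)*δ ≤ L := by
    have := Int.floor_le (L / (2*δ))
    rw [← hN] at this
    nlinarith [(le_div_iff₀ h2δ).mp this]
  have hf2 : L ≤ 2*((N:ℝ)+1)*δ := by
    have := (Int.lt_floor_add_one (L / (2*δ))).le
    rw [← hN] at this
    nlinarith [(div_le_iff₀ h2δ).mp this]
  have hEL : (2:ℝ)^L = br/cr := Real.rpow_logb two_pos (by norm_num) hrpos
  have hlow : (2:ℝ)^(2*((N:ℝ)*δ)) ≤ br/cr := by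
    rw [← hEL]
    exact (Real.rpow_le_rpow_left_iff one_lt_two).mpr (by linarith)
  have hhigh : br/cr ≤ (2:ℝ)^(2*(((N:ℝ)+1)*δ)) := by
    rw [← hEL]
    exact (Real.rpow_le_rpow_left_iff one_lt_two).mpr (by linarith)
  have claim2 : (2:ℝ≥0∞)^((N:ℝ)*δ) * C ≤ (B*C)^((1:ℝ)/2) :=
    enn_half hB0 hBt hC0 hCt hlow
  have claim1 : (2:ℝ≥0∞)^(-(N:ℝ)*δ) * B ≤ (2:ℝ≥0∞)^δ * (B*C)^((1:ℝ)/2) := by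
    have hinv : (2:ℝ)^(2*(-((N:ℝ)+1)*δ)) ≤ cr/br := by
      have e1 : (2:ℝ)^(2*(-((N:ℝ)+1)*δ)) = ((2:ℝ)^(2*(((N:ℝ)+1)*δ)))⁻¹ := by
        rw [← Real.rpow_neg two_pos.le]; ring_nf
      rw [e1, ← inv_div br cr]
      exact inv_anti₀ hrpos hhigh
    have base : (2:ℝ≥0∞)^(-((N:ℝ)+1)*δ) * B ≤ (C*B)^((1:ℝ)/2) :=
      enn_half hC0 hCt hB0 hBt hinv
    calc (2:ℝ≥0∞)^(-(N:ℝ)*δ) * B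
        = (2:ℝ≥0∞)^δ * ((2:ℝ≥0∞)^(-((N:ℝ)+1)*δ) * B) := by
          rw [← mul_assoc, E_mul]; congr 2; ring
      _ ≤ (2:ℝ≥0∞)^δ * (C*B)^((1:ℝ)/2) := mul_le_mul_right base _
      _ = (2:ℝ≥0∞)^δ * (B*C)^((1:ℝ)/2) := by rw [mul_comm C B]
  set G : ℝ≥0∞ := (1 - (2:ℝ≥0∞)^(-δ))⁻¹ with hG
  have h1 : ∑' n : ℕ, b ((n:ℤ) + N) ≤ G * ((2:ℝ≥0∞)^(-(N:ℝ)*δ) * B) := by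
    calc ∑' n : ℕ, b ((n:ℤ) + N)
        ≤ ∑' n : ℕ, (2:ℝ≥0∞)^(-(n:ℝ)*δ) * ((2:ℝ≥0∞)^(-(N:ℝ)*δ) * B) := by
          refine ENNReal.tsum_le_tsum fun n => ?_
          refine le_trans (hB ((n:ℤ) + N)) ?_
          rw [← mul_assoc, E_mul]
          apply le_of_eq
          congr 2
          push_cast
          ring
      _ = (∑' n : ℕ, (2:ℝ≥0∞)^(-(n:ℝ)*δ)) * ((2:ℝ≥0∞)^(-(N:ℝ)*δ) * B) :=
          ENNReal.tsum_mul_right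
      _ = G * ((2:ℝ≥0∞)^(-(N:ℝ)*δ) * B) := by rw [geo_sum]
  have h2 : ∑' n : ℕ, b (-((n:ℤ) + 1) + N) ≤ G * ((2:ℝ≥0∞)^((N:ℝ)*δ) * C) := by
    calc ∑' n : ℕ, b (-((n:ℤ) + 1) + N)
        ≤ ∑' n : ℕ, (2:ℝ≥0∞)^(-(n:ℝ)*δ) * ((2:ℝ≥0∞)^((N:ℝ)*δ) * C) := by
          refine ENNReal.tsum_le_tsum fun n => ?_
          refine le_trans (hC (-((n:ℤ) + 1) + N)) ?_
          have e1 : ((-((n:ℤ) + 1) + N : ℤ) : ℝ) * δ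
              = -(n:ℝ)*δ + (((N:ℝ) - 1)*δ) := by push_cast; ring
          rw [e1, ← E_mul, mul_assoc]
          refine mul_le_mul_right ?_ _
          refine mul_le_mul_left ?_ _
          exact ENNReal.rpow_le_rpow_of_exponent_le one_le_two (by nlinarith)
      _ = (∑' n : ℕ, (2:ℝ≥0∞)^(-(n:ℝ)*δ)) * ((2:ℝ≥0∞)^((N:ℝ)*δ) * C) :=
          ENNReal.tsum_mul_right
      _ = G * ((2:ℝ≥0∞)^((N:ℝ)*δ) * C) := by rw [geo_sum]
  calc ∑' k : ℤ, b k = ∑' k : ℤ, b (k + N) := by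
        rw [← (Equiv.addRight N).tsum_eq b]; rfl
    _ = ∑' n : ℕ, b ((n:ℤ) + N) + ∑' n : ℕ, b (-((n:ℤ) + 1) + N) :=
        tsum_of_nat_of_neg_add_one ENNReal.summable ENNReal.summable
    _ ≤ G * ((2:ℝ≥0∞)^(-(N:ℝ)*δ) * B) + G * ((2:ℝ≥0∞)^((N:ℝ)*δ) * C) :=
        add_le_add h1 h2
    _ ≤ G * ((2:ℝ≥0∞)^δ * (B*C)^((1:ℝ)/2)) + G * (B*C)^((1:ℝ)/2) :=
        add_le_add (mul_le_mul_right claim1 _) (mul_le_mul_right claim2 _)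
    _ = Kc δ * (B*C)^((1:ℝ)/2) := by rw [Kc]; ring

lemma le_shift {u A : ℝ≥0∞} {w x : ℝ} (h : (2:ℝ≥0∞)^x * u ≤ A) :
    (2:ℝ≥0∞)^(w+x) * u ≤ (2:ℝ≥0∞)^w * A := by
  rw [← E_mul, mul_assoc]; exact mul_le_mul_right h _

lemma half_of_sq {u A : ℝ≥0∞} {α β : ℝ}
    (h : (2:ℝ≥0∞)^(2*α) * (2:ℝ≥0∞)^(2*β) * u^2 ≤ A^2) :
    (2:ℝ≥0∞)^α * (2:ℝ≥0∞)^β * u ≤ A := by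
  have e : ∀ (x : ℝ≥0∞) (c : ℝ), (x^(2*c))^((1:ℝ)/2) = x^c := by
    intro x c
    rw [← ENNReal.rpow_mul, show 2*c*((1:ℝ)/2) = c by ring]
  have eu : ∀ x : ℝ≥0∞, (x^2)^((1:ℝ)/2) = x := by
    intro x
    rw [← ENNReal.rpow_natCast x 2, ← ENNReal.rpow_mul,
      show ((2:ℕ):ℝ)*((1:ℝ)/2) = 1 by norm_num, ENNReal.rpow_one]
  calc (2:ℝ≥0∞)^α * (2:ℝ≥0∞)^β * u
      = ((2:ℝ≥0∞)^(2*α) * (2:ℝ≥0∞)^(2*β) * u^2)^((1:ℝ)/2) := by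
        rw [ENNReal.mul_rpow_of_nonneg _ _ (by norm_num : (0:ℝ) ≤ 1/2),
          ENNReal.mul_rpow_of_nonneg _ _ (by norm_num : (0:ℝ) ≤ 1/2), e, e, eu]
    _ ≤ (A^2)^((1:ℝ)/2) := ENNReal.rpow_le_rpow h (by norm_num)
    _ = A := eu A

lemma weight_bound {a' A : ℝ≥0∞} {x₁ x₂ y₁ y₂ w₁ w₂ : ℝ}
    (h : (2:ℝ≥0∞)^y₁ * (2:ℝ≥0∞)^y₂ * a' ≤ A)
    (e : x₁ + x₂ = w₂ + (w₁ + (y₁ + y₂))) :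
    (2:ℝ≥0∞)^x₁ * (2:ℝ≥0∞)^x₂ * a' ≤ (2:ℝ≥0∞)^w₂ * ((2:ℝ≥0∞)^w₁ * A) := by
  rw [E_mul] at h ⊢
  have h2 := le_shift (w := w₂) (le_shift (w := w₁) h)
  rwa [← e] at h2

lemma enn_mul_min (c u v : ℝ≥0∞) : c * min u v = min (c*u) (c*v) := by
  rcases le_total u v with h|h
  · rw [min_eq_left h, min_eq_left (mul_le_mul_right h c)]
  · rw [min_eq_right h, min_eq_right (mul_le_mul_right h c)]

lemma sqrt_pull (w : ℝ) (X Y : ℝ≥0∞) :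
    (((2:ℝ≥0∞)^w * X) * ((2:ℝ≥0∞)^w * Y))^((1:ℝ)/2)
      = (2:ℝ≥0∞)^w * (X*Y)^((1:ℝ)/2) := by
  rw [mul_mul_mul_comm, E_mul, ENNReal.mul_rpow_of_nonneg _ _ (by norm_num : (0:ℝ) ≤ 1/2),
    ← ENNReal.rpow_mul, show (w+w)*((1:ℝ)/2) = w by ring]

lemma quarter (X Y : ℝ≥0∞) :
    ((X*Y)^((1:ℝ)/2))^((1:ℝ)/2) = X^((1:ℝ)/4) * Y^((1:ℝ)/4) := by
  rw [← ENNReal.rpow_mul, show (1:ℝ)/2*((1:ℝ)/2) = (1:ℝ)/4 by norm_num,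
    ENNReal.mul_rpow_of_nonneg _ _ (by norm_num : (0:ℝ) ≤ 1/4)]

lemma self_sqrt (K : ℝ≥0∞) : (K*K)^((1:ℝ)/2) = K := by
  rw [show K*K = K^(2:ℕ) by ring, ← ENNReal.rpow_natCast K 2, ← ENNReal.rpow_mul,
    show ((2:ℕ):ℝ)*((1:ℝ)/2) = 1 by norm_num, ENNReal.rpow_one]

/-- Abstract interpolation lemma behind estimate (2.8): if for all four sign
choices `ε₁, ε₂ ∈ {±1}` the weighted `ℓ²` sums
`∑_{k,ℓ} 2^{2k(s₁+ε₁δ)} 2^{2ℓ(s₂+ε₂δ)} a_{k,ℓ}² ≤ A_{ε₁ε₂}²` hold, then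
`∑_{k,ℓ} 2^{ks₁} 2^{ℓs₂} a_{k,ℓ} ≲ A₊₊^{1/4} A₊₋^{1/4} A₋₊^{1/4} A₋₋^{1/4}`. -/
theorem besov_interpolation (δ : ℝ) (hδ : 0 < δ) (s₁ s₂ : ℝ) :
    ∃ C : ℝ≥0∞, C ≠ ⊤ ∧
      ∀ (a : ℤ → ℤ → ℝ≥0∞) (App Apm Amp Amm : ℝ≥0∞),
        0 < App → 0 < Apm → 0 < Amp → 0 < Amm →
        (∑' (k : ℤ) (ℓ : ℤ), (2:ℝ≥0∞) ^ (2*(k:ℝ)*(s₁+δ)) * (2:ℝ≥0∞) ^ (2*(ℓ:ℝ)*(s₂+δ)) *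
            a k ℓ ^ 2 ≤ App ^ 2) →
        (∑' (k : ℤ) (ℓ : ℤ), (2:ℝ≥0∞) ^ (2*(k:ℝ)*(s₁+δ)) * (2:ℝ≥0∞) ^ (2*(ℓ:ℝ)*(s₂-δ)) *
            a k ℓ ^ 2 ≤ Apm ^ 2) →
        (∑' (k : ℤ) (ℓ : ℤ), (2:ℝ≥0∞) ^ (2*(k:ℝ)*(s₁-δ)) * (2:ℝ≥0∞) ^ (2*(ℓ:ℝ)*(s₂+δ)) *
            a k ℓ ^ 2 ≤ Amp ^ 2) →
        (∑' (k : ℤ) (ℓ : ℤ), (2:ℝ≥0∞) ^ (2*(k:ℝ)*(s₁-δ)) * (2:ℝ≥0∞) ^ (2*(ℓ:ℝ)*(s₂-δ)) *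
            a k ℓ ^ 2 ≤ Amm ^ 2) →
        ∑' (k : ℤ) (ℓ : ℤ), (2:ℝ≥0∞) ^ ((k:ℝ)*s₁) * (2:ℝ≥0∞) ^ ((ℓ:ℝ)*s₂) * a k ℓ ≤
          C * App ^ ((1:ℝ)/4) * Apm ^ ((1:ℝ)/4) * Amp ^ ((1:ℝ)/4) * Amm ^ ((1:ℝ)/4) := by
  refine ⟨Kc δ * Kc δ, ENNReal.mul_ne_top (Kc_ne_top hδ) (Kc_ne_top hδ), ?_⟩
  intro a App Apm Amp Amm _ _ _ _ hpp hpm hmp hmm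
  -- pointwise bounds from the ℓ² hypotheses
  have tb : ∀ (A : ℝ≥0∞) (σ₁ σ₂ : ℝ),
      (∑' (k : ℤ) (ℓ : ℤ), (2:ℝ≥0∞) ^ (2*(k:ℝ)*σ₁) * (2:ℝ≥0∞) ^ (2*(ℓ:ℝ)*σ₂) *
        a k ℓ ^ 2 ≤ A ^ 2) →
      ∀ k ℓ : ℤ, (2:ℝ≥0∞)^((k:ℝ)*σ₁) * (2:ℝ≥0∞)^((ℓ:ℝ)*σ₂) * a k ℓ ≤ A := by
    intro A σ₁ σ₂ h k ℓ
    have h1 : (2:ℝ≥0∞) ^ (2*(k:ℝ)*σ₁) * (2:ℝ≥0∞) ^ (2*(ℓ:ℝ)*σ₂) * a k ℓ ^ 2 ≤ A ^ 2 :=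
      le_trans (le_trans (ENNReal.le_tsum ℓ) (ENNReal.le_tsum k)) h
    have h2 : (2:ℝ≥0∞) ^ (2*((k:ℝ)*σ₁)) * (2:ℝ≥0∞) ^ (2*((ℓ:ℝ)*σ₂)) * a k ℓ ^ 2 ≤ A ^ 2 := by
      rw [show 2*((k:ℝ)*σ₁) = 2*(k:ℝ)*σ₁ by ring, show 2*((ℓ:ℝ)*σ₂) = 2*(ℓ:ℝ)*σ₂ by ring]
      exact h1
    exact half_of_sq h2
  have tpp := tb App (s₁+δ) (s₂+δ) hpp
  have tpm := tb Apm (s₁+δ) (s₂-δ) hpm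
  have tmp := tb Amp (s₁-δ) (s₂+δ) hmp
  have tmm := tb Amm (s₁-δ) (s₂-δ) hmm
  set Bk : ℤ → ℝ≥0∞ := fun k =>
    min ((2:ℝ≥0∞)^(-(k:ℝ)*δ) * App) ((2:ℝ≥0∞)^((k:ℝ)*δ) * Amp) with hBkdef
  set Ck : ℤ → ℝ≥0∞ := fun k =>
    min ((2:ℝ≥0∞)^(-(k:ℝ)*δ) * Apm) ((2:ℝ≥0∞)^((k:ℝ)*δ) * Amm) with hCkdef
  -- inner sums
  have inner : ∀ k : ℤ,
      ∑' ℓ : ℤ, (2:ℝ≥0∞) ^ ((k:ℝ)*s₁) * (2:ℝ≥0∞) ^ ((ℓ:ℝ)*s₂) * a k ℓ ≤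
        Kc δ * (Bk k * Ck k)^((1:ℝ)/2) := by
    intro k
    refine oneD hδ _ (Bk k) (Ck k) ?_ ?_
    · intro ℓ
      rw [hBkdef]
      simp only
      rw [enn_mul_min]
      exact le_min (weight_bound (tpp k ℓ) (by ring)) (weight_bound (tmp k ℓ) (by ring))
    · intro ℓ
      rw [hCkdef]
      simp only
      rw [enn_mul_min]
      exact le_min (weight_bound (tpm k ℓ) (by ring)) (weight_bound (tmm k ℓ) (by ring))
  set S : ℤ → ℝ≥0∞ :=
    fun k => ∑' ℓ : ℤ, (2:ℝ≥0∞) ^ ((k:ℝ)*s₁) * (2:ℝ≥0∞) ^ ((ℓ:ℝ)*s₂) * a k ℓ with hSdef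
  set B' : ℝ≥0∞ := Kc δ * (App*Apm)^((1:ℝ)/2) with hB'def
  set C' : ℝ≥0∞ := Kc δ * (Amp*Amm)^((1:ℝ)/2) with hC'def
  have hSB : ∀ k : ℤ, S k ≤ (2:ℝ≥0∞)^(-(k:ℝ)*δ) * B' := by
    intro k
    refine le_trans (inner k) ?_
    calc Kc δ * (Bk k * Ck k)^((1:ℝ)/2)
        ≤ Kc δ * (((2:ℝ≥0∞)^(-(k:ℝ)*δ) * App) * ((2:ℝ≥0∞)^(-(k:ℝ)*δ) * Apm))^((1:ℝ)/2) :=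
          mul_le_mul_right (ENNReal.rpow_le_rpow
            (mul_le_mul' (min_le_left _ _) (min_le_left _ _)) (by norm_num)) _
      _ = (2:ℝ≥0∞)^(-(k:ℝ)*δ) * B' := by rw [sqrt_pull, hB'def]; ring
  have hSC : ∀ k : ℤ, S k ≤ (2:ℝ≥0∞)^((k:ℝ)*δ) * C' := by
    intro k
    refine le_trans (inner k) ?_
    calc Kc δ * (Bk k * Ck k)^((1:ℝ)/2)
        ≤ Kc δ * (((2:ℝ≥0∞)^((k:ℝ)*δ) * Amp) * ((2:ℝ≥0∞)^((k:ℝ)*δ) * Amm))^((1:ℝ)/2) :=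
          mul_le_mul_right (ENNReal.rpow_le_rpow
            (mul_le_mul' (min_le_right _ _) (min_le_right _ _)) (by norm_num)) _
      _ = (2:ℝ≥0∞)^((k:ℝ)*δ) * C' := by rw [sqrt_pull, hC'def]; ring
  calc ∑' (k : ℤ) (ℓ : ℤ), (2:ℝ≥0∞) ^ ((k:ℝ)*s₁) * (2:ℝ≥0∞) ^ ((ℓ:ℝ)*s₂) * a k ℓ
      = ∑' k : ℤ, S k := rfl
    _ ≤ Kc δ * (B'*C')^((1:ℝ)/2) := oneD hδ S B' C' hSB hSC
    _ = Kc δ * Kc δ * App ^ ((1:ℝ)/4) * Apm ^ ((1:ℝ)/4) * Amp ^ ((1:ℝ)/4) * Amm ^ ((1:ℝ)/4) := by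
        rw [hB'def, hC'def, mul_mul_mul_comm,
          ENNReal.mul_rpow_of_nonneg _ _ (by norm_num : (0:ℝ) ≤ 1/2), self_sqrt,
          ENNReal.mul_rpow_of_nonneg _ _ (by norm_num : (0:ℝ) ≤ 1/2), quarter, quarter]
        ring
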